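/- arXiv:1907.07302 — 4 statements merged into one kernel-verified Lean document; each statement's English description precedes it below -/
import Mathlib

section
/- Let t > 0 and let K : ℝ → ℝ satisfy the kernel hypotheses. (a) Suppose Φ : ℝ → ℝ vanishes on (−∞, −t), is continuous and square-integrable on (−t, t), and satisfies Φ(x) + ∫_{−∞}^t K(x+y) Φ(y) dy = 1 for all x ∈ (−t, t). If the only f ∈ L²((−∞, t)) with f(x) − ∫_{−∞}^t K(x+y) f(y) dy = 0 for a.e. x < t is f = 0 a.e., then the one-sided limit Φ(t⁻) := lim_{x→t⁻} Φ(x) exists and Φ(t⁻) ≠ 0. (b) Analogously, suppose Ψ : ℝ → ℝ vanishes on (−∞, −t), is continuous and square-integrable on (−t, t), and satisfies Ψ(x) − ∫_{−∞}^t K(x+y) Ψ(y) dy = 1 for all x ∈ (−t, t). If the only f ∈ L²((−∞, t)) with f(x) + ∫_{−∞}^t K(x+y) f(y) dy = 0 for a.e. x < t is f = 0 a.e., then lim_{x→t⁻} Ψ(x) exists and is nonzero. -/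
/-!
On `(-t, t)` the equation reads `Φ = 1 - ε J` with `J(x) = ∫_{-t}^t K(x + y) Φ(y) dy`. As `K` is
continuous, so is `J`, hence `Φ(t⁻) = 1 - ε J(t)` exists. The function `J` is the primitive of
`g(x) = ∫_{-t}^t k(x + y) Φ(y) dy`, which lies in `L²` by Schur's test. Suppose `Φ(t⁻) = 0`, i.e.
`J(t) = ε`. Then `∫_s^t g = J(t) - J(s) = ε Φ(s)`, and since `K(x + y) = ∫_{-t}^y k(x + s) ds`
for `x < t`, Fubini gives `∫_{-t}^t K(x + y) g(y) dy = ∫_{-t}^t k(x + s) ε Φ(s) ds = ε g(x)`.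
So `g`, extended by zero, solves `f = ε K[t] f`, and injectivity forces `g = 0`. Then `J ≡ J(t)`
and `Φ = 1 - ε² = 0` on `(-t, t)`, whence `J(t) = 0 ≠ ε`. Parts (a) and (b) are `ε = 1` and
`ε = -1`.
-/

open MeasureTheory Set Filter

/-- With `S = Iio t` this is the operator `K[t]` of the integral equations. -/
noncomputable def hankelIntegral (K : ℝ → ℝ) (S : Set ℝ) (φ : ℝ → ℝ) (x : ℝ) : ℝ :=
  ∫ y in S, K (x + y) * φ y

theorem MeasureTheory.LocallyIntegrable.norm {X E : Type*} [MeasurableSpace X]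
    [TopologicalSpace X] [NormedAddCommGroup E] {f : X → E} {μ : Measure X}
    (hf : LocallyIntegrable f μ) : LocallyIntegrable (fun x => ‖f x‖) μ :=
  locallyIntegrableOn_univ.1 (locallyIntegrableOn_univ.2 hf).norm

theorem MeasureTheory.LocallyIntegrable.intervalIntegrable {E : Type*} [NormedAddCommGroup E]
    {f : ℝ → E} {μ : Measure ℝ} (hf : LocallyIntegrable f μ) (a b : ℝ) :
    IntervalIntegrable f μ a b :=
  (hf.integrableOn_isCompact isCompact_uIcc).intervalIntegrable

theorem MeasureTheory.LocallyIntegrable.exists_integrable_eqOn {E : Type*}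
    [NormedAddCommGroup E] {f : ℝ → E} {μ : Measure ℝ} (hf : LocallyIntegrable f μ) {C : Set ℝ}
    (hC : IsCompact C) : ∃ f' : ℝ → E, Integrable f' μ ∧ EqOn f f' C :=
  ⟨C.indicator f, (hf.integrableOn_isCompact hC).integrable_indicator hC.measurableSet,
    fun _ hx => (indicator_of_mem hx f).symm⟩

theorem sq_integral_mul_le_integral_mul_integral_mul_sq {α : Type*} [MeasurableSpace α]
    {μ : Measure α} {w f : α → ℝ} (hw0 : 0 ≤ᵐ[μ] w) (hw : Integrable w μ)
    (hwf : Integrable (fun a => w a * f a) μ) (hwf2 : Integrable (fun a => w a * f a ^ 2) μ) :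
    (∫ a, w a * f a ∂μ) ^ 2 ≤ (∫ a, w a ∂μ) * ∫ a, w a * f a ^ 2 ∂μ := by
  have hquad (r : ℝ) : 0 ≤ (∫ a, w a ∂μ) * (r * r) + (-2 * ∫ a, w a * f a ∂μ) * r
      + ∫ a, w a * f a ^ 2 ∂μ := by
    have hexpand : ∫ a, w a * (f a - r) ^ 2 ∂μ = ∫ a, w a * f a ^ 2 ∂μ
        - 2 * r * ∫ a, w a * f a ∂μ + r ^ 2 * ∫ a, w a ∂μ := by
      rw [← integral_const_mul, ← integral_const_mul, ← integral_sub hwf2 (hwf.const_mul _),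
        ← integral_add (f := fun a => w a * f a ^ 2 - 2 * r * (w a * f a))
          (hwf2.sub (hwf.const_mul _)) (hw.const_mul _)]
      congr 1 with a
      ring
    have := integral_nonneg_of_ae (hw0.mono fun a ha => mul_nonneg ha (sq_nonneg (f a - r)))
    linarith
  have := discrim_le_zero hquad
  rw [discrim] at this
  linarith

theorem setIntegral_Iio_eq_setIntegral_Ioo {E : Type*} [NormedAddCommGroup E] [NormedSpace ℝ E]
    {F : ℝ → E} {a b : ℝ} (hF : ∀ y < a, F y = 0) :
    ∫ y in Iio b, F y = ∫ y in Ioo a b, F y := by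
  refine setIntegral_eq_of_subset_of_ae_sdiff_eq_zero measurableSet_Iio.nullMeasurableSet
    Ioo_subset_Iio_self ?_
  filter_upwards [Measure.ae_ne volume a] with y hya hy
  exact hF y (lt_of_le_of_ne (not_lt.1 fun h => hy.2 ⟨h, hy.1⟩) hya)

section Integrability

variable {κ ψ : ℝ → ℝ}

theorem integrable_comp_add_mul_prod (hκ : Integrable κ) (hψ : Integrable ψ) :
    Integrable (fun p : ℝ × ℝ => κ (p.1 + p.2) * ψ p.2) (volume.prod volume) := by
  have hmeas : AEStronglyMeasurable (fun p : ℝ × ℝ => κ (p.1 + p.2) * ψ p.2)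
      (volume.prod volume) :=
    (hκ.aestronglyMeasurable.comp_quasiMeasurePreserving (quasiMeasurePreserving_add _ _)).mul
      (hψ.aestronglyMeasurable.comp_quasiMeasurePreserving Measure.quasiMeasurePreserving_snd)
  refine (integrable_prod_iff' hmeas).2
    ⟨.of_forall fun y => (hκ.comp_add_right y).mul_const (ψ y), ?_⟩
  simp_rw [norm_mul, integral_mul_const, integral_add_right_eq_self fun x => ‖κ x‖]
  exact hψ.norm.const_mul _

variable {S T : Set ℝ} {a b c d : ℝ}

theorem MeasureTheory.LocallyIntegrable.integrable_comp_add_mul_restrict_prod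
    (hκ : LocallyIntegrable κ) (hT : MeasurableSet T) (hS : MeasurableSet S)
    (hTab : T ⊆ Icc a b) (hScd : S ⊆ Icc c d) (hψ : IntegrableOn ψ S) :
    Integrable (fun p : ℝ × ℝ => κ (p.1 + p.2) * ψ p.2)
      ((volume.restrict T).prod (volume.restrict S)) := by
  obtain ⟨κ', hκ', hκκ'⟩ := hκ.exists_integrable_eqOn (isCompact_Icc (a := a + c) (b := b + d))
  rw [Measure.prod_restrict]
  refine (integrable_comp_add_mul_prod hκ' (hψ.integrable_indicator hS)).restrict.congr ?_
  filter_upwards [ae_restrict_mem (hT.prod hS)] with p ⟨hpT, hpS⟩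
  rw [hκκ' ⟨add_le_add (hTab hpT).1 (hScd hpS).1, add_le_add (hTab hpT).2 (hScd hpS).2⟩,
    indicator_of_mem hpS]

theorem sq_hankelIntegral_le {x : ℝ} (hw : IntegrableOn (fun y => ‖κ (x + y)‖) S)
    (hwψ : IntegrableOn (fun y => ‖κ (x + y)‖ * ‖ψ y‖) S)
    (hwψ2 : IntegrableOn (fun y => ‖κ (x + y)‖ * ψ y ^ 2) S) :
    hankelIntegral κ S ψ x ^ 2 ≤ (∫ y in S, ‖κ (x + y)‖) * ∫ y in S, ‖κ (x + y)‖ * ψ y ^ 2 :=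
  calc hankelIntegral κ S ψ x ^ 2 ≤ (∫ y in S, ‖κ (x + y)‖ * ‖ψ y‖) ^ 2 := by
        rw [← sq_abs, ← Real.norm_eq_abs, hankelIntegral]
        simp_rw [← norm_mul]
        gcongr
        exact norm_integral_le_integral_norm _
    _ ≤ _ := by
        simpa only [Real.norm_eq_abs (ψ _), sq_abs] using
          sq_integral_mul_le_integral_mul_integral_mul_sq (.of_forall fun _ => norm_nonneg _) hw
            hwψ (by simpa only [Real.norm_eq_abs, sq_abs, IntegrableOn] using hwψ2)

theorem MeasureTheory.LocallyIntegrable.memLp_two_hankelIntegral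
    (hκ : LocallyIntegrable κ) (hT : MeasurableSet T) (hS : MeasurableSet S)
    (hTab : T ⊆ Icc a b) (hScd : S ⊆ Icc c d) (hψ : MemLp ψ 2 (volume.restrict S)) :
    MemLp (hankelIntegral κ S ψ) 2 (volume.restrict T) := by
  have : IsFiniteMeasure (volume.restrict S) :=
    isFiniteMeasure_restrict.2 ((measure_mono hScd).trans_lt measure_Icc_lt_top).ne
  have hψ1 : IntegrableOn ψ S := hψ.integrable one_le_two
  have hψsq : IntegrableOn (fun y => ψ y ^ 2) S := (memLp_two_iff_integrable_sq hψ.1).1 hψ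
  obtain ⟨κ', hκ', hκκ'⟩ := hκ.exists_integrable_eqOn (isCompact_Icc (a := a + c) (b := b + d))
  have hsq := hκ.norm.integrable_comp_add_mul_restrict_prod hT hS hTab hScd hψsq
  have habs := hκ.norm.integrable_comp_add_mul_restrict_prod hT hS hTab hScd hψ1.norm
  have hbound : ∀ᵐ x ∂volume.restrict T, hankelIntegral κ S ψ x ^ 2 ≤
      (∫ u, ‖κ' u‖) * ∫ y in S, ‖κ (x + y)‖ * ψ y ^ 2 := by
    filter_upwards [hsq.prod_right_ae, habs.prod_right_ae, ae_restrict_mem hT]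
      with x hxsq hxabs hxT
    have hκx : EqOn (fun y => ‖κ (x + y)‖) (fun y => ‖κ' (x + y)‖) S := fun y hy => by
      simp only [hκκ' ⟨add_le_add (hTab hxT).1 (hScd hy).1, add_le_add (hTab hxT).2 (hScd hy).2⟩]
    refine (sq_hankelIntegral_le (((hκ'.comp_add_left x).norm.integrableOn).congr_fun hκx.symm hS)
      hxabs hxsq).trans ?_
    gcongr ?_ * _
    rw [setIntegral_congr_fun hS hκx, ← integral_add_left_eq_self (fun u => ‖κ' u‖) x]
    exact setIntegral_le_integral (hκ'.comp_add_left x).norm (.of_forall fun _ => norm_nonneg _)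
  have hmeas : AEStronglyMeasurable (hankelIntegral κ S ψ) (volume.restrict T) :=
    (hκ.integrable_comp_add_mul_restrict_prod hT hS hTab hScd
      hψ1).aestronglyMeasurable.integral_prod_right'
  refine (memLp_two_iff_integrable_sq hmeas).2
    ((hsq.integral_prod_left.const_mul (∫ u, ‖κ' u‖)).mono' (hmeas.pow 2) ?_)
  filter_upwards [hbound] with x hx
  rwa [Real.norm_eq_abs, abs_of_nonneg (sq_nonneg _)]

end Integrability

section Primitive

variable {k K ψ : ℝ → ℝ} {S : Set ℝ} {c d : ℝ}

theorem hankelIntegral_sub_eq_intervalIntegral (hk : LocallyIntegrable k)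
    (hK : ∀ x, K x = ∫ y in (0:ℝ)..x, k y) (hS : MeasurableSet S) (hScd : S ⊆ Icc c d)
    (hψ : IntegrableOn ψ S) (a b : ℝ) :
    hankelIntegral K S ψ b - hankelIntegral K S ψ a = ∫ s in a..b, hankelIntegral k S ψ s := by
  have hKc : Continuous K :=
    funext hK ▸ intervalIntegral.continuous_primitive hk.intervalIntegrable 0
  have hKψ (x : ℝ) : IntegrableOn (fun y => K (x + y) * ψ y) S :=
    hψ.continuousOn_mul_of_subset (hKc.comp (continuous_const_add x)).continuousOn isCompact_Icc
      hS hScd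
  rw [hankelIntegral, hankelIntegral, ← integral_sub (hKψ b) (hKψ a)]
  simp only [hankelIntegral]
  rw [intervalIntegral_integral_swap
    (hk.integrable_comp_add_mul_restrict_prod measurableSet_uIoc hS uIoc_subset_uIcc hScd hψ)]
  refine integral_congr_ae (.of_forall fun y => ?_)
  dsimp only
  rw [intervalIntegral.integral_mul_const, intervalIntegral.integral_comp_add_right, hK, hK,
    ← sub_mul, intervalIntegral.integral_interval_sub_left (hk.intervalIntegrable _ _)
      (hk.intervalIntegrable _ _)]

theorem continuous_hankelIntegral (hk : LocallyIntegrable k)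
    (hK : ∀ x, K x = ∫ y in (0:ℝ)..x, k y) (hS : MeasurableSet S) (hScd : S ⊆ Icc c d)
    (hψ : IntegrableOn ψ S) : Continuous (hankelIntegral K S ψ) := by
  have hg (a b : ℝ) : IntervalIntegrable (hankelIntegral k S ψ) volume a b :=
    (intervalIntegrable_iff.2 (hk.integrable_comp_add_mul_restrict_prod measurableSet_uIoc hS
      uIoc_subset_uIcc hScd hψ).integral_prod_left)
  convert (intervalIntegral.continuous_primitive hg 0).add
    (continuous_const (y := hankelIntegral K S ψ 0)) using 1
  funext x
  rw [Pi.add_apply, ← hankelIntegral_sub_eq_intervalIntegral hk hK hS hScd hψ, sub_add_cancel]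

theorem hankelIntegral_Ioo_eq_integral_mul_integral_Ioc (hk : LocallyIntegrable k)
    (hK : ∀ x, K x = ∫ y in (0:ℝ)..x, k y) {g : ℝ → ℝ} {a b x : ℝ} (hxa : K (x + a) = 0)
    (hg : IntegrableOn g (Ioo a b)) :
    hankelIntegral K (Ioo a b) g x = ∫ s in Ioo a b, k (x + s) * ∫ y in Ioc s b, g y := by
  obtain ⟨k', hk', hkk'⟩ := hk.exists_integrable_eqOn (isCompact_Icc (a := x + a) (b := x + b))
  have hkx : IntegrableOn (fun s => k (x + s)) (Ioo a b) :=
    (hk'.comp_add_left x).integrableOn.congr_fun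
      (fun s hs => (hkk' ⟨by linarith [hs.1], by linarith [hs.2]⟩).symm) measurableSet_Ioo
  have hKx (y : ℝ) (hy : y ∈ Ioo a b) : K (x + y) = ∫ s in Ioc a y, k (x + s) := by
    rw [← sub_zero (K (x + y)), ← hxa, hK, hK, intervalIntegral.integral_interval_sub_left
      (hk.intervalIntegrable _ _) (hk.intervalIntegrable _ _),
      ← intervalIntegral.integral_comp_add_left, intervalIntegral.integral_of_le hy.1.le]
  set F : ℝ → ℝ → ℝ := fun y s => (Iic y).indicator (fun s => k (x + s) * g y) s
  have hF : Integrable (Function.uncurry F)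
      ((volume.restrict (Ioo a b)).prod (volume.restrict (Ioo a b))) := by
    have : Function.uncurry F =
        {p : ℝ × ℝ | p.2 ≤ p.1}.indicator fun p => g p.1 * k (x + p.2) := by
      ext ⟨y, s⟩
      simp [F, indicator_apply, mul_comm]
    rw [this]
    exact (hg.mul_prod hkx).indicator (measurableSet_le measurable_snd measurable_fst)
  calc hankelIntegral K (Ioo a b) g x = ∫ y in Ioo a b, ∫ s in Ioo a b, F y s := by
        refine setIntegral_congr_fun measurableSet_Ioo fun y hy => ?_
        have hset : Ioo a b ∩ Iic y = Ioc a y := by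
          ext s; simp only [mem_inter_iff, mem_Ioo, mem_Iic, mem_Ioc]; grind [hy.2]
        simp only [F, indicator_mul_left, integral_mul_const]
        rw [setIntegral_indicator measurableSet_Iic, hset, hKx y hy]
    _ = ∫ s in Ioo a b, ∫ y in Ioo a b, F y s := integral_integral_swap hF
    _ = ∫ s in Ioo a b, k (x + s) * ∫ y in Ioc s b, g y := by
        refine setIntegral_congr_fun measurableSet_Ioo fun s hs => ?_
        have hset : Ioo a b ∩ Ici s = Ico s b := by
          ext y; simp only [mem_inter_iff, mem_Ioo, mem_Ici, mem_Ico]; grind [hs.1]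
        have hFs : (fun y => F y s) = (Ici s).indicator fun y => k (x + s) * g y := by
          ext y
          simp [F, indicator_apply]
        simp only [hFs]
        rw [setIntegral_indicator measurableSet_Ici, hset, integral_const_mul,
          integral_Ico_eq_integral_Ioc]

end Primitive

theorem MeasureTheory.LocallyIntegrableOn.locallyIntegrable_indicator {f : ℝ → ℝ} {s u : Set ℝ}
    (hf : LocallyIntegrableOn f s) (hs : IsClosed s) (hu : MeasurableSet u) (hus : u ⊆ s) :
    LocallyIntegrable (u.indicator f) := by
  refine locallyIntegrable_iff.2 fun C hC => ?_
  rw [IntegrableOn, integrable_indicator_iff hu, IntegrableOn, Measure.restrict_restrict hu]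
  exact (hf.integrableOn_compact_subset inter_subset_left (hC.inter_left hs)).mono_set
    (inter_subset_inter_left _ hus)

theorem eq_intervalIntegral_indicator_Ioi {k K : ℝ → ℝ} (hK0 : ∀ x < 0, K x = 0)
    (hKk : ∀ x ≥ 0, K x = ∫ y in (0:ℝ)..x, k y) (x : ℝ) :
    K x = ∫ y in (0:ℝ)..x, (Ioi 0).indicator k y := by
  rcases le_or_gt 0 x with hx | hx
  · rw [hKk x hx]
    refine intervalIntegral.integral_congr_ae (.of_forall fun y hy => ?_)
    rw [uIoc_of_le hx] at hy
    exact (indicator_of_mem hy.1 k).symm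
  · rw [hK0 x hx, intervalIntegral.integral_symm, intervalIntegral.integral_congr
      (g := fun _ => 0) fun y hy => indicator_of_notMem ?_ k]
    · simp
    · rw [uIcc_of_le hx.le] at hy
      exact not_lt.2 hy.2

section IntegralEquation

variable {t ε : ℝ} {k K : ℝ → ℝ}

theorem indicator_sub_hankelIntegral_Iio_eq_zero (hK0 : ∀ x < 0, K x = 0) (hε : ε * ε = 1)
    {g : ℝ → ℝ} (hg : ∀ x ∈ Ioo (-t) t, hankelIntegral K (Ioo (-t) t) g x = ε * g x) {x : ℝ}
    (hx : x < t) :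
    (Ioo (-t) t).indicator g x - ε * hankelIntegral K (Iio t) ((Ioo (-t) t).indicator g) x = 0 := by
  have hrestrict : hankelIntegral K (Iio t) ((Ioo (-t) t).indicator g) x =
      hankelIntegral K (Ioo (-t) t) g x := by
    rw [hankelIntegral, setIntegral_Iio_eq_setIntegral_Ioo fun y hy => by
      rw [indicator_of_notMem fun h => lt_asymm hy h.1, mul_zero]]
    exact setIntegral_congr_fun measurableSet_Ioo fun y hy => by rw [indicator_of_mem hy]
  rw [hrestrict]
  by_cases hxS : x ∈ Ioo (-t) t
  · rw [indicator_of_mem hxS, hg x hxS, ← mul_assoc, hε, one_mul, sub_self]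
  · have hxt : x ≤ -t := not_lt.1 fun h => hxS ⟨h, hx⟩
    rw [indicator_of_notMem hxS, hankelIntegral, setIntegral_eq_zero_of_forall_eq_zero
      fun y hy => by rw [hK0 _ (by linarith [hy.2]), zero_mul]]
    ring

theorem hankelIntegral_hankelIntegral_eq_mul (hk : LocallyIntegrable k)
    (hK : ∀ x, K x = ∫ y in (0:ℝ)..x, k y) (hK0 : ∀ x < 0, K x = 0) (hε : ε * ε = 1)
    {Φ : ℝ → ℝ} (hΦ : IntegrableOn Φ (Ioo (-t) t))
    (hΦJ : ∀ x ∈ Ioo (-t) t, Φ x = 1 - ε * hankelIntegral K (Ioo (-t) t) Φ x)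
    (hJt : hankelIntegral K (Ioo (-t) t) Φ t = ε) {x : ℝ} (hx : x ∈ Ioo (-t) t) :
    hankelIntegral K (Ioo (-t) t) (hankelIntegral k (Ioo (-t) t) Φ) x =
      ε * hankelIntegral k (Ioo (-t) t) Φ x := by
  have hg : IntegrableOn (hankelIntegral k (Ioo (-t) t) Φ) (Ioo (-t) t) :=
    (hk.integrable_comp_add_mul_restrict_prod measurableSet_Ioo measurableSet_Ioo
      Ioo_subset_Icc_self Ioo_subset_Icc_self hΦ).integral_prod_left
  rw [hankelIntegral_Ioo_eq_integral_mul_integral_Ioc hk hK (hK0 _ (by linarith [hx.2])) hg,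
    hankelIntegral, ← integral_const_mul]
  refine setIntegral_congr_fun measurableSet_Ioo fun s hs => ?_
  have htail : ∫ y in Ioc s t, hankelIntegral k (Ioo (-t) t) Φ y = ε * Φ s := by
    rw [← intervalIntegral.integral_of_le hs.2.le, ← hankelIntegral_sub_eq_intervalIntegral hk hK
      measurableSet_Ioo Ioo_subset_Icc_self hΦ, hJt, hΦJ s hs]
    linear_combination hankelIntegral K (Ioo (-t) t) Φ s * hε
  rw [htail]
  ring

theorem eq_one_sub_mul_hankelIntegral_Ioo {Φ : ℝ → ℝ} (hΦ0 : ∀ x < -t, Φ x = 0)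
    (hΦeq : ∀ x ∈ Ioo (-t) t, Φ x + ε * ∫ y in Iio t, K (x + y) * Φ y = 1)
    (x : ℝ) (hx : x ∈ Ioo (-t) t) : Φ x = 1 - ε * hankelIntegral K (Ioo (-t) t) Φ x := by
  have := hΦeq x hx
  rw [setIntegral_Iio_eq_setIntegral_Ioo fun y hy => by rw [hΦ0 y hy, mul_zero]] at this
  exact eq_sub_of_add_eq this

theorem hankelIntegral_ae_eq_zero (hk : LocallyIntegrable k)
    (hK : ∀ x, K x = ∫ y in (0:ℝ)..x, k y) (hK0 : ∀ x < 0, K x = 0) (hε : ε * ε = 1)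
    {Φ : ℝ → ℝ} (hΦ2 : MemLp Φ 2 (volume.restrict (Ioo (-t) t)))
    (hΦJ : ∀ x ∈ Ioo (-t) t, Φ x = 1 - ε * hankelIntegral K (Ioo (-t) t) Φ x)
    (hJt : hankelIntegral K (Ioo (-t) t) Φ t = ε)
    (hinj : ∀ f : ℝ → ℝ, MemLp f 2 (volume.restrict (Iio t)) →
      (∀ᵐ x ∂volume.restrict (Iio t), f x - ε * ∫ y in Iio t, K (x + y) * f y = 0) →
      f =ᵐ[volume.restrict (Iio t)] 0) :
    ∀ᵐ x ∂volume.restrict (Ioo (-t) t), hankelIntegral k (Ioo (-t) t) Φ x = 0 := by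
  set g := hankelIntegral k (Ioo (-t) t) Φ
  have hg2 : MemLp ((Ioo (-t) t).indicator g) 2 (volume.restrict (Iio t)) := by
    rw [memLp_indicator_iff_restrict measurableSet_Ioo,
      Measure.restrict_restrict_of_subset Ioo_subset_Iio_self]
    exact hk.memLp_two_hankelIntegral measurableSet_Ioo measurableSet_Ioo Ioo_subset_Icc_self
      Ioo_subset_Icc_self hΦ2
  have hf := hinj _ hg2 (ae_restrict_of_forall_mem measurableSet_Iio fun x hx =>
    indicator_sub_hankelIntegral_Iio_eq_zero hK0 hε (fun _ hy =>
      hankelIntegral_hankelIntegral_eq_mul hk hK hK0 hε (hΦ2.integrable one_le_two) hΦJ hJt hy) hx)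
  filter_upwards [ae_restrict_of_ae_restrict_of_subset Ioo_subset_Iio_self hf,
    ae_restrict_mem measurableSet_Ioo] with x hx hxS
  rwa [Pi.zero_apply, indicator_of_mem hxS] at hx

theorem exists_ne_zero_tendsto_of_integral_equation (ht : 0 < t) (hε : ε * ε = 1)
    (hk : LocallyIntegrable k) (hK : ∀ x, K x = ∫ y in (0:ℝ)..x, k y) (hK0 : ∀ x < 0, K x = 0)
    {Φ : ℝ → ℝ} (hΦ0 : ∀ x < -t, Φ x = 0) (hΦ2 : MemLp Φ 2 (volume.restrict (Ioo (-t) t)))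
    (hΦeq : ∀ x ∈ Ioo (-t) t, Φ x + ε * ∫ y in Iio t, K (x + y) * Φ y = 1)
    (hinj : ∀ f : ℝ → ℝ, MemLp f 2 (volume.restrict (Iio t)) →
      (∀ᵐ x ∂volume.restrict (Iio t), f x - ε * ∫ y in Iio t, K (x + y) * f y = 0) →
      f =ᵐ[volume.restrict (Iio t)] 0) :
    ∃ L : ℝ, L ≠ 0 ∧ Tendsto Φ (nhdsWithin t (Iio t)) (nhds L) := by
  have hΦ1 : IntegrableOn Φ (Ioo (-t) t) := hΦ2.integrable one_le_two
  set J := hankelIntegral K (Ioo (-t) t) Φ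
  have hΦJ := eq_one_sub_mul_hankelIntegral_Ioo hΦ0 hΦeq
  have hlim : Tendsto Φ (nhdsWithin t (Iio t)) (nhds (1 - ε * J t)) := by
    have hJ := continuous_hankelIntegral hk hK measurableSet_Ioo Ioo_subset_Icc_self hΦ1
    refine (((continuous_const.sub (continuous_const.mul hJ)).tendsto t).mono_left
      nhdsWithin_le_nhds).congr' ?_
    filter_upwards [Ioo_mem_nhdsLT (by linarith : -t < t)] with x hx using (hΦJ x hx).symm
  refine ⟨_, fun hL => ?_, hlim⟩
  have hJt : J t = ε := by linear_combination (-ε) * hL - J t * hε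
  have hg0 := hankelIntegral_ae_eq_zero hk hK hK0 hε hΦ2 hΦJ hJt hinj
  have hΦzero (s : ℝ) (hs : s ∈ Ioo (-t) t) : Φ s = 0 := by
    have hJs : J t - J s = 0 := by
      rw [hankelIntegral_sub_eq_intervalIntegral hk hK measurableSet_Ioo Ioo_subset_Icc_self hΦ1]
      refine intervalIntegral.integral_zero_ae ?_
      filter_upwards [(ae_restrict_iff' measurableSet_Ioo).1 hg0, Measure.ae_ne volume t]
        with x hx hxt hmem
      rw [uIoc_of_le hs.2.le] at hmem
      exact hx ⟨hs.1.trans hmem.1, lt_of_le_of_ne hmem.2 hxt⟩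
    rw [hΦJ s hs]
    linear_combination ε * hJs - ε * hJt - hε
  have hJt0 : J t = 0 :=
    setIntegral_eq_zero_of_forall_eq_zero fun y hy => by rw [hΦzero y hy, mul_zero]
  exact one_ne_zero (hε.symm.trans (by rw [← hJt, hJt0, zero_mul]))

end IntegralEquation

theorem statement0_general (t : ℝ) (ht : 0 < t) (K k : ℝ → ℝ)
    (hK0 : ∀ x < (0:ℝ), K x = 0)
    (hk : LocallyIntegrableOn k (Ici 0))
    (hKk : ∀ x ≥ (0:ℝ), K x = ∫ y in (0:ℝ)..x, k y)
    (Φ Ψ : ℝ → ℝ)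
    -- part (a): hypotheses on Φ
    (hΦ0 : ∀ x < -t, Φ x = 0)
    (hΦ2 : MemLp Φ 2 (volume.restrict (Ioo (-t) t)))
    (hΦeq : ∀ x ∈ Ioo (-t) t, Φ x + ∫ y in Iio t, K (x + y) * Φ y = 1)
    (hminus : ∀ f : ℝ → ℝ, MemLp f 2 (volume.restrict (Iio t)) →
      (∀ᵐ x ∂volume.restrict (Iio t), f x - ∫ y in Iio t, K (x + y) * f y = 0) →
      f =ᵐ[volume.restrict (Iio t)] 0)
    -- part (b): hypotheses on Ψ
    (hΨ0 : ∀ x < -t, Ψ x = 0)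
    (hΨ2 : MemLp Ψ 2 (volume.restrict (Ioo (-t) t)))
    (hΨeq : ∀ x ∈ Ioo (-t) t, Ψ x - ∫ y in Iio t, K (x + y) * Ψ y = 1)
    (hplus : ∀ f : ℝ → ℝ, MemLp f 2 (volume.restrict (Iio t)) →
      (∀ᵐ x ∂volume.restrict (Iio t), f x + ∫ y in Iio t, K (x + y) * f y = 0) →
      f =ᵐ[volume.restrict (Iio t)] 0) :
    (∃ L : ℝ, L ≠ 0 ∧ Tendsto Φ (nhdsWithin t (Iio t)) (nhds L)) ∧
    (∃ L : ℝ, L ≠ 0 ∧ Tendsto Ψ (nhdsWithin t (Iio t)) (nhds L)) := by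
  have hk₀ := hk.locallyIntegrable_indicator isClosed_Ici measurableSet_Ioi Ioi_subset_Ici_self
  have hK := eq_intervalIntegral_indicator_Ioi hK0 hKk
  exact ⟨exists_ne_zero_tendsto_of_integral_equation ht (one_mul 1) hk₀ hK hK0 hΦ0 hΦ2
      (fun x hx => by simpa using hΦeq x hx) fun f hf hsol => hminus f hf (by simpa using hsol),
    exists_ne_zero_tendsto_of_integral_equation (ε := -1) ht (by norm_num) hk₀ hK hK0 hΨ0 hΨ2
      (fun x hx => by simpa [← sub_eq_add_neg] using hΨeq x hx)
      fun f hf hsol => hplus f hf (by simpa using hsol)⟩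

/-- existence and non-vanishing of the one-sided limits `Φ(t⁻)`, `Ψ(t⁻)`
for solutions of the integral equations `Φ + K[t]Φ = 1` and `Ψ - K[t]Ψ = 1`,
under injectivity of `1 ∓ K[t]` on `L²((-∞,t))`. -/
theorem statement0 (t : ℝ) (ht : 0 < t) (K k : ℝ → ℝ)
    (hK0 : ∀ x < (0:ℝ), K x = 0)
    (hk : LocallyIntegrableOn k (Ici 0))
    (hKk : ∀ x ≥ (0:ℝ), K x = ∫ y in (0:ℝ)..x, k y)
    (Φ Ψ : ℝ → ℝ)
    -- part (a): hypotheses on Φ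
    (hΦ0 : ∀ x < -t, Φ x = 0)
    (hΦc : ContinuousOn Φ (Ioo (-t) t))
    (hΦ2 : MemLp Φ 2 (volume.restrict (Ioo (-t) t)))
    (hΦeq : ∀ x ∈ Ioo (-t) t, Φ x + ∫ y in Iio t, K (x + y) * Φ y = 1)
    (hminus : ∀ f : ℝ → ℝ, MemLp f 2 (volume.restrict (Iio t)) →
      (∀ᵐ x ∂volume.restrict (Iio t), f x - ∫ y in Iio t, K (x + y) * f y = 0) →
      f =ᵐ[volume.restrict (Iio t)] 0)
    -- part (b): hypotheses on Ψ
    (hΨ0 : ∀ x < -t, Ψ x = 0)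
    (hΨc : ContinuousOn Ψ (Ioo (-t) t))
    (hΨ2 : MemLp Ψ 2 (volume.restrict (Ioo (-t) t)))
    (hΨeq : ∀ x ∈ Ioo (-t) t, Ψ x - ∫ y in Iio t, K (x + y) * Ψ y = 1)
    (hplus : ∀ f : ℝ → ℝ, MemLp f 2 (volume.restrict (Iio t)) →
      (∀ᵐ x ∂volume.restrict (Iio t), f x + ∫ y in Iio t, K (x + y) * f y = 0) →
      f =ᵐ[volume.restrict (Iio t)] 0) :
    (∃ L : ℝ, L ≠ 0 ∧ Tendsto Φ (nhdsWithin t (Iio t)) (nhds L)) ∧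
    (∃ L : ℝ, L ≠ 0 ∧ Tendsto Ψ (nhdsWithin t (Iio t)) (nhds L)) :=
  statement0_general t ht K k hK0 hk hKk Φ Ψ hΦ0 hΦ2 hΦeq hminus hΨ0 hΨ2 hΨeq hplus
end

section
/- Let τ > 0, let K : ℝ → ℝ satisfy the kernel hypotheses, and let Φ : (0, τ) × ℝ → ℝ be such that for each t ∈ (0, τ): Φ(t, x) = 0 for x < −t, and Φ(t, x) + ∫_{−∞}^t K(x+y) Φ(t, y) dy = 1 for all x ∈ (−t, t). Assume the partial derivatives ∂Φ/∂x and ∂Φ/∂t exist and are jointly continuous on {(t, x) : 0 < t < τ, −t < x ≤ t} (values at x = t understood as one-sided limits), and that Φ(t, t) := lim_{x→t⁻} Φ(t, x) is nonzero for every t ∈ (0, τ). Define φ⁺(t, x) := −(∂Φ/∂t)(t, x)/Φ(t, t) and φ⁻(t, x) := −(∂Φ/∂x)(t, x)/Φ(t, t), with φ±(t, t) := lim_{x→t⁻} φ±(t, x). Then the function t ↦ Φ(t, t) is differentiable on (0, τ) and satisfies (d/dt)Φ(t, t) = −Φ(t, t) · (φ⁺(t, t) + φ⁻(t, t)). If moreover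 lim_{t→0⁺} Φ(t, t) = 1 and τ′ ↦ φ⁺(τ′, τ′) + φ⁻(τ′, τ′) is integrable near 0, then Φ(t, t) = exp(−∫₀ᵗ (φ⁺(τ′, τ′) + φ⁻(τ′, τ′)) dτ′) for all t ∈ (0, τ); equivalently m(t) · Φ(t, t) = 1, where m(t) := exp(∫₀ᵗ (φ⁺(τ′, τ′) + φ⁻(τ′, τ′)) dτ′). -/
/-!
Since `Φ(t, t)` is only the left limit of `x ↦ Φ(t, x)` at `x = t`, the ordinary chain rule
does not apply to `t ↦ Φ(t, t)`. Writing `x = t₀ - 2|t - t₀|`, the increment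
`Φ(t, t) - Φ(t₀, t₀)` splits into the increments of `Φ` from `(t, x)` to `(t, t)`, from `(t₀, x)`
to `(t, x)` and from `(t₀, x)` to `(t₀, t₀)`; all the points involved lie within `2|t - t₀|` of
`(t₀, t₀)`, so the mean value inequality and the continuity of the partial derivatives at
`(t₀, t₀)` give `(d/dt)Φ(t, t) = Φₜ(t, t) + Φₓ(t, t) = -Φ(t, t)(φ⁺(t, t) + φ⁻(t, t))`.
Solving this linear ODE, `exp(∫₀ᵗ (φ⁺ + φ⁻)) Φ(t, t)` has zero derivative on `(0, τ)` and tends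
to `1` at `0⁺`, hence is identically `1`.
-/

open MeasureTheory Set Filter Topology

theorem abs_sub_sub_mul_le_of_hasDerivAt {f f' : ℝ → ℝ} {s : Set ℝ} {x y c ε : ℝ}
    (hs : Convex ℝ s) (hf : ∀ z ∈ s, HasDerivAt f (f' z) z) (hbound : ∀ z ∈ s, |f' z - c| ≤ ε)
    (hx : x ∈ s) (hy : y ∈ s) : |f y - f x - c * (y - x)| ≤ ε * |y - x| := by
  have h := hs.norm_image_sub_le_of_norm_hasDerivWithin_le (f := fun z => f z - c * z)
    (fun z hz => ((hf z hz).sub ((hasDerivAt_id z).const_mul c)).hasDerivWithinAt)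
    (by simpa using hbound) hx hy
  simp only [Real.norm_eq_abs] at h
  rwa [show f y - f x - c * (y - x) = f y - c * y - (f x - c * x) by ring]

theorem abs_sub_sub_mul_le_of_tendsto_nhdsLT {f f' : ℝ → ℝ} {x b c ε L : ℝ} (hxb : x < b)
    (hf : ∀ y ∈ Ico x b, HasDerivAt f (f' y) y) (hbound : ∀ y ∈ Ico x b, |f' y - c| ≤ ε)
    (hL : Tendsto f (𝓝[<] b) (𝓝 L)) : |L - f x - c * (b - x)| ≤ ε * (b - x) := by
  have hε : 0 ≤ ε := (abs_nonneg _).trans (hbound x (left_mem_Ico.2 hxb))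
  have hlim : Tendsto (fun y => |f y - f x - c * (y - x)|) (𝓝[<] b)
      (𝓝 |L - f x - c * (b - x)|) :=
    ((hL.sub_const _).sub (((tendsto_id.mono_left nhdsWithin_le_nhds).sub_const x).const_mul c)).abs
  refine le_of_tendsto hlim ?_
  filter_upwards [Ioo_mem_nhdsLT hxb] with y hy
  calc |f y - f x - c * (y - x)| ≤ ε * |y - x| :=
        abs_sub_sub_mul_le_of_hasDerivAt (convex_Ico x b) hf hbound (left_mem_Ico.2 hxb)
          (Ioo_subset_Ico_self hy)
    _ ≤ ε * (b - x) := by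
        rw [abs_of_pos (sub_pos.2 hy.1)]
        gcongr
        exact hy.2.le

theorem exp_integral_mul_eq_of_hasDerivAt {Λ g : ℝ → ℝ} {a b L t : ℝ}
    (hΛ : ∀ s ∈ Ioo a b, HasDerivAt Λ (-(Λ s) * g s) s) (hg : ContinuousOn g (Ioo a b))
    (hint : ∀ s ∈ Ioo a b, IntegrableOn g (Ioc a s)) (hlim : Tendsto Λ (𝓝[>] a) (𝓝 L))
    (ht : t ∈ Ioo a b) : Real.exp (∫ u in a..t, g u) * Λ t = L := by
  set G : ℝ → ℝ := fun s => ∫ u in a..s, g u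
  have hG : ∀ s ∈ Ioo a b, HasDerivAt G (g s) s := fun s hs =>
    intervalIntegral.integral_hasDerivAt_right
      ((intervalIntegrable_iff_integrableOn_Ioc_of_le hs.1.le).2 (hint s hs))
      (hg.stronglyMeasurableAtFilter isOpen_Ioo s hs) (hg.continuousAt (isOpen_Ioo.mem_nhds hs))
  have hF : ∀ s ∈ Ioo a b, HasDerivAt (fun s => Real.exp (G s) * Λ s) 0 s := fun s hs =>
    ((hG s hs).exp.mul (hΛ s hs)).congr_deriv (by ring)
  have hconst : ∀ s ∈ Ioo a b, Real.exp (G s) * Λ s = Real.exp (G t) * Λ t := fun s hs =>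
    isOpen_Ioo.is_const_of_deriv_eq_zero isPreconnected_Ioo
      (fun z hz => (hF z hz).differentiableAt.differentiableWithinAt) (fun z hz => (hF z hz).deriv)
      hs ht
  have hG0 : Tendsto G (𝓝[>] a) (𝓝 0) := by
    have hcont : ContinuousWithinAt G (Icc a t) a :=
      intervalIntegral.continuousWithinAt_primitive (measure_singleton a) (by
        rw [min_self, max_eq_right ht.1.le, intervalIntegrable_iff_integrableOn_Ioc_of_le ht.1.le]
        exact hint t ht)
    simpa [G] using (hcont.mono_of_mem_nhdsWithin (Icc_mem_nhdsGT ht.1)).tendsto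
  have hFlim : Tendsto (fun s => Real.exp (G s) * Λ s) (𝓝[>] a) (𝓝 L) := by
    simpa using ((Real.continuous_exp.tendsto 0).comp hG0).mul hlim
  refine tendsto_nhds_unique (tendsto_const_nhds.congr' ?_) hFlim
  filter_upwards [Ioo_mem_nhdsGT (ht.1.trans ht.2)] with s hs
  exact (hconst s hs).symm

def triangle (τ : ℝ) : Set (ℝ × ℝ) := {p | 0 < p.1 ∧ p.1 < τ ∧ -p.1 < p.2 ∧ p.2 ≤ p.1}

theorem continuousOn_diag_of_continuousOn_triangle {τ : ℝ} {F : ℝ → ℝ → ℝ}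
    (hF : ContinuousOn (fun p : ℝ × ℝ => F p.1 p.2) (triangle τ)) :
    ContinuousOn (fun u => F u u) (Ioo 0 τ) :=
  hF.comp (continuous_id.prodMk continuous_id).continuousOn
    fun u hu => show 0 < u ∧ u < τ ∧ -u < u ∧ u ≤ u from ⟨hu.1, hu.2, by linarith [hu.1], le_rfl⟩

theorem exists_pos_forall_near_diag {τ t₀ ε : ℝ} {Φx Φt : ℝ → ℝ → ℝ}
    (hcx : ContinuousOn (fun p : ℝ × ℝ => Φx p.1 p.2) (triangle τ))
    (hct : ContinuousOn (fun p : ℝ × ℝ => Φt p.1 p.2) (triangle τ))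
    (ht₀ : t₀ ∈ Ioo 0 τ) (hε : 0 < ε) :
    ∃ r > 0, ∀ Δ < r, ∀ s y, |s - t₀| ≤ Δ → t₀ - 2 * Δ ≤ y → y ≤ s →
      s ∈ Ioo 0 τ ∧ -s < y ∧ |Φx s y - Φx t₀ t₀| ≤ ε ∧ |Φt s y - Φt t₀ t₀| ≤ ε := by
  have hmem : ((t₀, t₀) : ℝ × ℝ) ∈ triangle τ := ⟨ht₀.1, ht₀.2, by linarith [ht₀.1], le_rfl⟩
  obtain ⟨δx, hδx, hx⟩ := Metric.continuousWithinAt_iff.1 (hcx _ hmem) _ hε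
  obtain ⟨δt, hδt, ht⟩ := Metric.continuousWithinAt_iff.1 (hct _ hmem) _ hε
  refine ⟨min (min δx δt / 2) (min (t₀ / 2) (τ - t₀)),
    lt_min (by positivity) (lt_min (by linarith [ht₀.1]) (by linarith [ht₀.2])),
    fun Δ hΔ s y hs hy hys => ?_⟩
  simp only [lt_min_iff] at hΔ
  obtain ⟨hΔδ, hΔt₀, hΔτ⟩ := hΔ
  obtain ⟨hs₁, hs₂⟩ := abs_le.1 hs
  have hsy : ((s, y) : ℝ × ℝ) ∈ triangle τ := ⟨by linarith, by linarith, by linarith, hys⟩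
  have hdist : dist ((s, y) : ℝ × ℝ) (t₀, t₀) ≤ 2 * Δ := by
    rw [Prod.dist_eq, Real.dist_eq, Real.dist_eq]
    exact max_le (by linarith) (abs_le.2 ⟨by linarith, by linarith⟩)
  exact ⟨⟨hsy.1, hsy.2.1⟩, hsy.2.2.1, (hx hsy (by linarith [min_le_left δx δt])).le,
    (ht hsy (by linarith [min_le_right δx δt])).le⟩

theorem abs_diag_sub_sub_mul_le {τ t₀ t ε : ℝ} {Φ Φx Φt : ℝ → ℝ → ℝ} {Λ : ℝ → ℝ}
    (hdx : ∀ t ∈ Ioo 0 τ, ∀ x ∈ Ioo (-t) t, HasDerivAt (Φ t) (Φx t x) x)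
    (hdt : ∀ t ∈ Ioo 0 τ, ∀ x ∈ Ioo (-t) t, HasDerivAt (fun u => Φ u x) (Φt t x) t)
    (hΛ : ∀ t ∈ Ioo 0 τ, Tendsto (Φ t) (𝓝[<] t) (𝓝 (Λ t))) (hne : t ≠ t₀)
    (hnear : ∀ s y, |s - t₀| ≤ |t - t₀| → t₀ - 2 * |t - t₀| ≤ y → y ≤ s →
      s ∈ Ioo 0 τ ∧ -s < y ∧ |Φx s y - Φx t₀ t₀| ≤ ε ∧ |Φt s y - Φt t₀ t₀| ≤ ε) :
    |Λ t - Λ t₀ - (t - t₀) * (Φt t₀ t₀ + Φx t₀ t₀)| ≤ 6 * ε * |t - t₀| := by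
  set Δ := |t - t₀|
  have hΔ : 0 < Δ := abs_pos.2 (sub_ne_zero.2 hne)
  obtain ⟨ht₁, ht₂⟩ := abs_le.1 (le_refl |t - t₀|)
  set x := t₀ - 2 * Δ
  have hε : 0 ≤ ε := (abs_nonneg _).trans (hnear t₀ t₀ (by simp [hΔ.le]) (by linarith) le_rfl).2.2.1
  have hslice : ∀ s, |s - t₀| ≤ Δ → |Λ s - Φ s x - Φx t₀ t₀ * (s - x)| ≤ ε * (s - x) := by
    intro s hs
    have hxs : x < s := by linarith [(abs_le.1 hs).1]
    refine abs_sub_sub_mul_le_of_tendsto_nhdsLT (f' := Φx s) hxs (fun y hy => ?_) (fun y hy => ?_)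
      (hΛ s (hnear s s hs hxs.le le_rfl).1)
    · obtain ⟨hs₀, hsy, -⟩ := hnear s y hs hy.1 hy.2.le
      exact hdx s hs₀ y ⟨hsy, hy.2⟩
    · exact (hnear s y hs hy.1 hy.2.le).2.2.1
  have hcross : |Φ t x - Φ t₀ x - Φt t₀ t₀ * (t - t₀)| ≤ ε * Δ := by
    have hs : ∀ s ∈ uIcc t₀ t, |s - t₀| ≤ Δ ∧ x < s := fun s hs =>
      ⟨abs_sub_left_of_mem_uIcc hs, by linarith [(abs_le.1 (abs_sub_left_of_mem_uIcc hs)).1]⟩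
    refine abs_sub_sub_mul_le_of_hasDerivAt (f := fun u => Φ u x) (f' := fun s => Φt s x)
      (convex_uIcc t₀ t) (fun s hsI => ?_) (fun s hsI => ?_) left_mem_uIcc right_mem_uIcc
    · obtain ⟨hsΔ, hxs⟩ := hs s hsI
      obtain ⟨hs₀, hsx, -⟩ := hnear s x hsΔ le_rfl hxs.le
      exact hdt s hs₀ x ⟨hsx, hxs⟩
    · obtain ⟨hsΔ, hxs⟩ := hs s hsI
      exact (hnear s x hsΔ le_rfl hxs.le).2.2.2
  have ht := hslice t le_rfl
  have ht₀ := hslice t₀ (by simp [hΔ.le])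
  calc |Λ t - Λ t₀ - (t - t₀) * (Φt t₀ t₀ + Φx t₀ t₀)|
      = |(Λ t - Φ t x - Φx t₀ t₀ * (t - x)) + (Φ t x - Φ t₀ x - Φt t₀ t₀ * (t - t₀))
          - (Λ t₀ - Φ t₀ x - Φx t₀ t₀ * (t₀ - x))| := by congr 1; ring
    _ ≤ ε * (t - x) + ε * Δ + ε * (t₀ - x) :=
        (abs_sub _ _).trans (add_le_add ((abs_add_le _ _).trans (add_le_add ht hcross)) ht₀)
    _ ≤ 6 * ε * Δ := by nlinarith

theorem hasDerivAt_diag {τ t₀ : ℝ} {Φ Φx Φt : ℝ → ℝ → ℝ} {Λ : ℝ → ℝ}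
    (hdx : ∀ t ∈ Ioo 0 τ, ∀ x ∈ Ioo (-t) t, HasDerivAt (Φ t) (Φx t x) x)
    (hdt : ∀ t ∈ Ioo 0 τ, ∀ x ∈ Ioo (-t) t, HasDerivAt (fun u => Φ u x) (Φt t x) t)
    (hcx : ContinuousOn (fun p : ℝ × ℝ => Φx p.1 p.2) (triangle τ))
    (hct : ContinuousOn (fun p : ℝ × ℝ => Φt p.1 p.2) (triangle τ))
    (hΛ : ∀ t ∈ Ioo 0 τ, Tendsto (Φ t) (𝓝[<] t) (𝓝 (Λ t))) (ht₀ : t₀ ∈ Ioo 0 τ) :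
    HasDerivAt Λ (Φt t₀ t₀ + Φx t₀ t₀) t₀ := by
  rw [hasDerivAt_iff_isLittleO, Asymptotics.isLittleO_iff]
  intro c hc
  obtain ⟨r, hr, hnear⟩ := exists_pos_forall_near_diag hcx hct ht₀ (by positivity : 0 < c / 6)
  filter_upwards [Metric.ball_mem_nhds t₀ hr] with t ht
  rcases eq_or_ne t t₀ with rfl | hne
  · simp
  have h := abs_diag_sub_sub_mul_le hdx hdt hΛ hne (hnear |t - t₀| ht)
  rw [Real.norm_eq_abs, Real.norm_eq_abs, smul_eq_mul]
  linarith

theorem statement3_general (τ : ℝ)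
    (Φ Φx Φt : ℝ → ℝ → ℝ) (Λ : ℝ → ℝ)
    (hdx : ∀ t ∈ Ioo 0 τ, ∀ x ∈ Ioo (-t) t, HasDerivAt (Φ t) (Φx t x) x)
    (hdt : ∀ t ∈ Ioo 0 τ, ∀ x ∈ Ioo (-t) t, HasDerivAt (fun u => Φ u x) (Φt t x) t)
    (hcx : ContinuousOn (fun p : ℝ × ℝ => Φx p.1 p.2)
      {p : ℝ × ℝ | 0 < p.1 ∧ p.1 < τ ∧ -p.1 < p.2 ∧ p.2 ≤ p.1})
    (hct : ContinuousOn (fun p : ℝ × ℝ => Φt p.1 p.2)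
      {p : ℝ × ℝ | 0 < p.1 ∧ p.1 < τ ∧ -p.1 < p.2 ∧ p.2 ≤ p.1})
    (hΛlim : ∀ t ∈ Ioo 0 τ, Tendsto (Φ t) (nhdsWithin t (Iio t)) (nhds (Λ t)))
    (hΛne : ∀ t ∈ Ioo 0 τ, Λ t ≠ 0) :
    -- t ↦ Φ(t,t) is differentiable and (d/dt)Φ(t,t) = -Φ(t,t)(φ⁺(t,t)+φ⁻(t,t))
    (∀ t ∈ Ioo 0 τ,
      HasDerivAt Λ (-(Λ t) * ((-(Φt t t) / Λ t) + (-(Φx t t) / Λ t))) t) ∧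
    -- if Φ(t,t) → 1 as t → 0⁺ and φ⁺(t,t)+φ⁻(t,t) is integrable near 0, then
    -- Φ(t,t) = exp(-∫₀ᵗ(φ⁺+φ⁻)) and m(t)·Φ(t,t) = 1
    (Tendsto Λ (nhdsWithin 0 (Ioi 0)) (nhds 1) →
      (∀ t ∈ Ioo 0 τ, IntegrableOn
        (fun u => (-(Φt u u) / Λ u) + (-(Φx u u) / Λ u)) (Ioc 0 t)) →
      ∀ t ∈ Ioo 0 τ,
        Λ t = Real.exp (-∫ u in (0:ℝ)..t, ((-(Φt u u) / Λ u) + (-(Φx u u) / Λ u))) ∧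
        Real.exp (∫ u in (0:ℝ)..t, ((-(Φt u u) / Λ u) + (-(Φx u u) / Λ u))) * Λ t = 1) := by
  have hderiv : ∀ t ∈ Ioo 0 τ,
      HasDerivAt Λ (-(Λ t) * ((-(Φt t t) / Λ t) + (-(Φx t t) / Λ t))) t := fun t ht =>
    (hasDerivAt_diag hdx hdt hcx hct hΛlim ht).congr_deriv (by field_simp [hΛne t ht]; ring)
  refine ⟨hderiv, fun hlim hint t ht => ?_⟩
  have hΛ : ContinuousOn Λ (Ioo 0 τ) := fun s hs => (hderiv s hs).continuousAt.continuousWithinAt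
  have hrate : ContinuousOn (fun u => (-(Φt u u) / Λ u) + (-(Φx u u) / Λ u)) (Ioo 0 τ) :=
    ((continuousOn_diag_of_continuousOn_triangle hct).neg.div hΛ hΛne).add
      ((continuousOn_diag_of_continuousOn_triangle hcx).neg.div hΛ hΛne)
  have hmul := exp_integral_mul_eq_of_hasDerivAt hderiv hrate hint hlim ht
  exact ⟨by rw [Real.exp_neg]; exact eq_inv_of_mul_eq_one_right hmul, hmul⟩

/-- the derivative formula `(d/dt)Φ(t,t) = -Φ(t,t)(φ⁺(t,t)+φ⁻(t,t))` and the
consequent formula `Φ(t,t) = exp(-∫₀ᵗ (φ⁺+φ⁻))`, i.e. `m(t)Φ(t,t) = 1`.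
Here `Λ t` denotes the one-sided limit `Φ(t,t) = lim_{x→t⁻} Φ(t,x)`,
`φ⁺(t,t) = -(∂Φ/∂t)(t,t)/Φ(t,t)` and `φ⁻(t,t) = -(∂Φ/∂x)(t,t)/Φ(t,t)`
(values at `x = t` are the one-sided limits, enforced by joint continuity up to `x = t`). -/
theorem statement3 (τ : ℝ) (hτ : 0 < τ) (K k : ℝ → ℝ)
    (hK0 : ∀ x < (0:ℝ), K x = 0)
    (hk : LocallyIntegrableOn k (Ici 0))
    (hKk : ∀ x ≥ (0:ℝ), K x = ∫ y in (0:ℝ)..x, k y)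
    (Φ Φx Φt : ℝ → ℝ → ℝ) (Λ : ℝ → ℝ)
    (hΦ0 : ∀ t ∈ Ioo 0 τ, ∀ x < -t, Φ t x = 0)
    (hΦeq : ∀ t ∈ Ioo 0 τ, ∀ x ∈ Ioo (-t) t,
      Φ t x + ∫ y in Iio t, K (x + y) * Φ t y = 1)
    (hdx : ∀ t ∈ Ioo 0 τ, ∀ x ∈ Ioo (-t) t, HasDerivAt (Φ t) (Φx t x) x)
    (hdt : ∀ t ∈ Ioo 0 τ, ∀ x ∈ Ioo (-t) t, HasDerivAt (fun u => Φ u x) (Φt t x) t)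
    (hcx : ContinuousOn (fun p : ℝ × ℝ => Φx p.1 p.2)
      {p : ℝ × ℝ | 0 < p.1 ∧ p.1 < τ ∧ -p.1 < p.2 ∧ p.2 ≤ p.1})
    (hct : ContinuousOn (fun p : ℝ × ℝ => Φt p.1 p.2)
      {p : ℝ × ℝ | 0 < p.1 ∧ p.1 < τ ∧ -p.1 < p.2 ∧ p.2 ≤ p.1})
    (hΛlim : ∀ t ∈ Ioo 0 τ, Tendsto (Φ t) (nhdsWithin t (Iio t)) (nhds (Λ t)))
    (hΛne : ∀ t ∈ Ioo 0 τ, Λ t ≠ 0) :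
    -- t ↦ Φ(t,t) is differentiable and (d/dt)Φ(t,t) = -Φ(t,t)(φ⁺(t,t)+φ⁻(t,t))
    (∀ t ∈ Ioo 0 τ,
      HasDerivAt Λ (-(Λ t) * ((-(Φt t t) / Λ t) + (-(Φx t t) / Λ t))) t) ∧
    -- if Φ(t,t) → 1 as t → 0⁺ and φ⁺(t,t)+φ⁻(t,t) is integrable near 0, then
    -- Φ(t,t) = exp(-∫₀ᵗ(φ⁺+φ⁻)) and m(t)·Φ(t,t) = 1
    (Tendsto Λ (nhdsWithin 0 (Ioi 0)) (nhds 1) →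
      (∀ t ∈ Ioo 0 τ, IntegrableOn
        (fun u => (-(Φt u u) / Λ u) + (-(Φx u u) / Λ u)) (Ioc 0 t)) →
      ∀ t ∈ Ioo 0 τ,
        Λ t = Real.exp (-∫ u in (0:ℝ)..t, ((-(Φt u u) / Λ u) + (-(Φx u u) / Λ u))) ∧
        Real.exp (∫ u in (0:ℝ)..t, ((-(Φt u u) / Λ u) + (-(Φx u u) / Λ u))) * Λ t = 1) :=
  statement3_general τ Φ Φx Φt Λ hdx hdt hcx hct hΛlim hΛne
end

section
/- Let θ > 0 and α ≥ 0. For every complex z with Im(z) > −1/2, setting s := 1/2 − iz, the integral ∫₀^∞ Ψ⁰_{θ,α}(x) e^{izx} dx converges absolutely and equals s^{−θ} exp(α/s), where s^{−θ} = exp(−θ Log s) is the principal power (note Re(s) > 0). -/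
/-!
Expanding `Ψ⁰_{θ,α}(x) e^{izx} = Σₘ αᵐ/(m! Γ(θ+m)) · x^{θ+m-1} e^{-sx}` and integrating term by
term, each term contributes `αᵐ/m! · s^{-θ-m}` by the Laplace transform `∫₀^∞ x^{a-1} e^{-sx} dx =
Γ(a) s^{-a}`, and the resulting series is `s^{-θ} exp(α/s)`. The interchange is justified because
the integrals of the absolute values of the terms sum to `r^{-θ} exp(|α|/r)` with `r = Re s > 0`.
-/

open MeasureTheory Set Filter Topology

/-- `Ψ⁰_{θ,α}(x) = e^{-x/2} Σ_{m≥0} αᵐ x^{m+θ-1}/(m! Γ(θ+m))` for `x > 0`, and `0` for `x ≤ 0`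
(equivalently `e^{-x/2} (x/α)^{(θ-1)/2} I_{θ-1}(2√(αx))`). -/
noncomputable def Psi0 (θ α x : ℝ) : ℝ :=
  if 0 < x then
    Real.exp (-x / 2) *
      ∑' m : ℕ, α ^ m * x ^ ((m : ℝ) + θ - 1) / (m.factorial * Real.Gamma (θ + m))
  else 0

namespace MeasureTheory

lemma integrable_tsum_of_summable_integral_norm {α E ι : Type*} [MeasurableSpace α]
    {μ : Measure α} [NormedAddCommGroup E] [CompleteSpace E] [Countable ι] {F : ι → α → E}
    (hF_int : ∀ i, Integrable (F i) μ) (hF_sum : Summable fun i ↦ ∫ a, ‖F i a‖ ∂μ) :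
    Integrable (fun a ↦ ∑' i, F i a) μ := by
  set G : ι → α →₁[μ] E := fun i ↦ (hF_int i).toL1 (F i)
  have hG : ∑' i, ‖G i‖ₑ ≠ ⊤ := by
    have hnorm i : ‖G i‖ₑ = ENNReal.ofReal (∫ a, ‖F i a‖ ∂μ) :=
      (Integrable.enorm_toL1 _).trans (ofReal_integral_norm_eq_lintegral_enorm (hF_int i)).symm
    rw [tsum_congr hnorm, ← ENNReal.ofReal_tsum_of_nonneg
      (fun i ↦ integral_nonneg fun _ ↦ norm_nonneg _) hF_sum]
    exact ENNReal.ofReal_ne_top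
  refine (L1.integrable_coeFn (∑' i, G i)).congr ?_
  filter_upwards [Lp.coeFn_tsum hG, ae_all_iff.2 fun i ↦ (hF_int i).coeFn_toL1] with a hsum hF
  rw [hsum]
  exact tsum_congr hF

end MeasureTheory

namespace Complex

lemma norm_cpow_sub_one_mul_cexp_neg_mul {x : ℝ} (hx : 0 < x) (a s : ℂ) :
    ‖(x : ℂ) ^ (a - 1) * cexp (-(s * x))‖ = x ^ (a.re - 1) * Real.exp (-(s.re * x)) := by
  simp [norm_exp, norm_cpow_eq_rpow_re_of_pos hx]

lemma aestronglyMeasurable_cpow_sub_one_mul_cexp_neg_mul (a s : ℂ) :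
    AEStronglyMeasurable (fun x : ℝ ↦ (x : ℂ) ^ (a - 1) * cexp (-(s * x)))
      (volume.restrict (Ioi 0)) :=
  ContinuousOn.aestronglyMeasurable (.mul (.cpow_const (by fun_prop)
    fun _ hx ↦ ofReal_mem_slitPlane.2 hx) (by fun_prop)) measurableSet_Ioi

lemma integrableOn_cpow_sub_one_mul_cexp_neg_mul {a s : ℂ} (ha : 0 < a.re) (hs : 0 < s.re) :
    IntegrableOn (fun x : ℝ ↦ (x : ℂ) ^ (a - 1) * cexp (-(s * x))) (Ioi 0) := by
  refine Integrable.mono'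
    (integrableOn_rpow_mul_exp_neg_mul_rpow (s := a.re - 1) (by linarith) one_pos hs)
    (aestronglyMeasurable_cpow_sub_one_mul_cexp_neg_mul a s) ?_
  filter_upwards [ae_restrict_mem measurableSet_Ioi] with x hx
  rw [norm_cpow_sub_one_mul_cexp_neg_mul hx, Real.rpow_one, neg_mul]

lemma differentiableOn_integral_cpow_sub_one_mul_cexp_neg_mul {a : ℂ} (ha : 0 < a.re) :
    DifferentiableOn ℂ (fun s : ℂ ↦ ∫ x in Ioi (0 : ℝ), (x : ℂ) ^ (a - 1) * cexp (-(s * x)))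
      {s | 0 < s.re} := by
  intro w (hw : 0 < w.re)
  have hε : 0 < w.re / 2 := half_pos hw
  have h_bound : ∀ x ∈ Ioi (0 : ℝ), ∀ s ∈ Metric.ball w (w.re / 2),
      ‖-(x : ℂ) * ((x : ℂ) ^ (a - 1) * cexp (-(s * x)))‖
        ≤ x ^ a.re * Real.exp (-(w.re / 2) * x ^ (1 : ℝ)) := by
    intro x (hx : 0 < x) s hs
    have hre : w.re / 2 ≤ s.re := by
      have := (abs_re_le_norm (s - w)).trans (mem_ball_iff_norm.1 hs).le
      rw [sub_re, abs_le] at this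
      linarith
    rw [norm_mul, norm_neg, norm_real, Real.norm_of_nonneg hx.le,
      norm_cpow_sub_one_mul_cexp_neg_mul hx, ← mul_assoc, Real.rpow_one,
      ← Real.rpow_one_add' hx.le (by linarith), add_sub_cancel, neg_mul]
    gcongr
  have h_deriv : ∀ x : ℝ, ∀ s : ℂ, HasDerivAt (fun s ↦ (x : ℂ) ^ (a - 1) * cexp (-(s * x)))
      (-(x : ℂ) * ((x : ℂ) ^ (a - 1) * cexp (-(s * x)))) s := fun x s ↦
    ((((hasDerivAt_id' s).mul_const (x : ℂ)).fun_neg.cexp).const_mul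
      ((x : ℂ) ^ (a - 1))).congr_deriv (by ring)
  exact (hasDerivAt_integral_of_dominated_loc_of_deriv_le (Metric.ball_mem_nhds w hε)
    (.of_forall fun s ↦ aestronglyMeasurable_cpow_sub_one_mul_cexp_neg_mul a s)
    (integrableOn_cpow_sub_one_mul_cexp_neg_mul ha hw)
    (continuous_ofReal.aestronglyMeasurable.neg.mul
      (aestronglyMeasurable_cpow_sub_one_mul_cexp_neg_mul a w))
    ((ae_restrict_iff' measurableSet_Ioi).2 (.of_forall h_bound))
    (integrableOn_rpow_mul_exp_neg_mul_rpow (by linarith) one_pos hε)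
    (.of_forall fun x s _ ↦ h_deriv x s)).2.differentiableAt.differentiableWithinAt

/-- Both sides are holomorphic on `Re s > 0` and agree for real `s > 0`. -/
theorem integral_cpow_sub_one_mul_cexp_neg_mul_Ioi {a s : ℂ} (ha : 0 < a.re) (hs : 0 < s.re) :
    ∫ x in Ioi (0 : ℝ), (x : ℂ) ^ (a - 1) * cexp (-(s * x)) = Gamma a * s ^ (-a) := by
  have h_real : ∀ r : ℝ, 0 < r →
      ∫ x in Ioi (0 : ℝ), (x : ℂ) ^ (a - 1) * cexp (-(r * x)) = Gamma a * (r : ℂ) ^ (-a) := by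
    intro r hr
    rw [integral_cpow_mul_exp_neg_mul_Ioi ha hr, one_div,
      inv_cpow _ _ (by rw [arg_ofReal_of_nonneg hr.le]; exact Real.pi_ne_zero.symm),
      ← cpow_neg, mul_comm]
  have h_freq : ∃ᶠ w in 𝓝[≠] (1 : ℂ),
      ∫ x in Ioi (0 : ℝ), (x : ℂ) ^ (a - 1) * cexp (-(w * x)) = Gamma a * w ^ (-a) := by
    have h_ofReal : Tendsto ((↑) : ℝ → ℂ) (𝓝[≠] 1) (𝓝[≠] 1) := by
      have := continuous_ofReal.continuousWithinAt.tendsto_nhdsWithin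
        (x := 1) (s := {(1 : ℝ)}ᶜ) (t := {(1 : ℂ)}ᶜ) fun r hr ↦ ofReal_ne_one.2 hr
      rwa [ofReal_one] at this
    exact h_ofReal.frequently ((eventually_nhdsWithin_of_eventually_nhds
      (lt_mem_nhds one_pos)).mono h_real).frequently
  have h_open : IsOpen {s : ℂ | 0 < s.re} := isOpen_lt continuous_const continuous_re
  refine ((differentiableOn_integral_cpow_sub_one_mul_cexp_neg_mul ha).analyticOnNhd h_open
    ).eqOn_of_preconnected_of_frequently_eq ?_ (convex_halfSpace_re_gt 0).isPreconnected
    (by simp) h_freq hs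
  exact (DifferentiableOn.analyticOnNhd (fun w (hw : 0 < w.re) ↦ ((differentiableAt_id.cpow
    (differentiableAt_const _) (.inl hw)).const_mul _).differentiableWithinAt) h_open)

end Complex

open Complex Nat

noncomputable def psi0Term (θ α : ℝ) (s : ℂ) (m : ℕ) (x : ℝ) : ℂ :=
  ((α ^ m / (m ! * Real.Gamma (θ + m)) : ℝ) : ℂ) *
    ((x : ℂ) ^ ((θ + m : ℂ) - 1) * cexp (-(s * x)))

lemma Psi0_mul_cexp_eq_tsum_psi0Term (θ α : ℝ) (z : ℂ) {x : ℝ} (hx : 0 < x) :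
    (Psi0 θ α x : ℂ) * cexp (I * z * x) = ∑' m, psi0Term θ α (1 / 2 - I * z) m x := by
  have h_exp : (Real.exp (-x / 2) : ℂ) * cexp (I * z * x) = cexp (-((1 / 2 - I * z) * x)) := by
    rw [ofReal_exp, ← Complex.exp_add]
    push_cast
    ring_nf
  rw [Psi0, if_pos hx, ofReal_mul, ofReal_tsum, mul_right_comm, mul_comm, h_exp,
    ← tsum_mul_right]
  refine tsum_congr fun m ↦ ?_
  rw [psi0Term, mul_div_right_comm, ofReal_mul, ofReal_cpow hx.le]
  push_cast
  ring_nf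

lemma integrableOn_psi0Term {θ : ℝ} (hθ : 0 < θ) (α : ℝ) {s : ℂ} (hs : 0 < s.re) (m : ℕ) :
    IntegrableOn (psi0Term θ α s m) (Ioi 0) := by
  have hθm : 0 < ((θ : ℂ) + m).re := by
    simp only [add_re, ofReal_re, natCast_re]
    positivity
  exact (integrableOn_cpow_sub_one_mul_cexp_neg_mul hθm hs).const_mul _

lemma integral_psi0Term {θ : ℝ} (hθ : 0 < θ) (α : ℝ) {s : ℂ} (hs : 0 < s.re) (m : ℕ) :
    ∫ x in Ioi (0 : ℝ), psi0Term θ α s m x = s ^ (-(θ : ℂ)) * ((α / s) ^ m / m !) := by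
  have hs₀ : s ≠ 0 := fun h ↦ by simp [h] at hs
  have hθm : 0 < ((θ : ℂ) + m).re := by
    simp only [add_re, ofReal_re, natCast_re]
    positivity
  have hΓ : (Real.Gamma (θ + m) : ℂ) ≠ 0 :=
    ofReal_ne_zero.2 (Real.Gamma_pos_of_pos (by positivity)).ne'
  simp only [psi0Term]
  rw [integral_const_mul, integral_cpow_sub_one_mul_cexp_neg_mul_Ioi hθm hs,
    neg_add, cpow_add _ _ hs₀, cpow_neg _ (m : ℂ), cpow_natCast,
    ← ofReal_natCast, ← ofReal_add, Gamma_ofReal]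
  push_cast
  rw [div_pow]
  field_simp

lemma integral_norm_psi0Term {θ : ℝ} (hθ : 0 < θ) (α : ℝ) {s : ℂ} (hs : 0 < s.re) (m : ℕ) :
    ∫ x in Ioi (0 : ℝ), ‖psi0Term θ α s m x‖ = (1 / s.re) ^ θ * ((|α| / s.re) ^ m / m !) := by
  have hθm : 0 < θ + m := by positivity
  have hΓ : 0 < Real.Gamma (θ + m) := Real.Gamma_pos_of_pos hθm
  have h_norm : ∀ x ∈ Ioi (0 : ℝ), ‖psi0Term θ α s m x‖
      = |α| ^ m / (m ! * Real.Gamma (θ + m)) * (x ^ (θ + m - 1) * Real.exp (-(s.re * x))) := by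
    intro x (hx : 0 < x)
    rw [psi0Term, norm_mul, norm_real, Real.norm_eq_abs, abs_div, abs_pow,
      abs_of_pos (by positivity : (0 : ℝ) < m ! * Real.Gamma (θ + m)),
      show (θ + m : ℂ) = ((θ + m : ℝ) : ℂ) by push_cast; rfl,
      norm_cpow_sub_one_mul_cexp_neg_mul hx, ofReal_re]
  rw [setIntegral_congr_fun measurableSet_Ioi h_norm, integral_const_mul,
    Real.integral_rpow_mul_exp_neg_mul_Ioi hθm hs, Real.rpow_add (by positivity),
    Real.rpow_natCast]
  simp only [div_pow, one_pow]
  field_simp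

theorem statement6_general (θ α : ℝ) (hθ : 0 < θ) :
    ∀ z : ℂ, -1/2 < z.im → ∀ s : ℂ, s = 1/2 - Complex.I * z →
      IntegrableOn (fun x : ℝ => (Psi0 θ α x : ℂ) * Complex.exp (Complex.I * z * x)) (Ioi 0) ∧
      ∫ x in Ioi (0:ℝ), (Psi0 θ α x : ℂ) * Complex.exp (Complex.I * z * x)
        = s ^ (-(θ : ℂ)) * Complex.exp ((α : ℂ) / s) := by
  rintro z hz s rfl
  have hs : 0 < (1 / 2 - I * z).re := by
    simpa using (by linarith : (0 : ℝ) < 2⁻¹ + z.im)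
  have h_eq : EqOn (fun x : ℝ ↦ (Psi0 θ α x : ℂ) * cexp (I * z * x))
      (fun x ↦ ∑' m, psi0Term θ α (1 / 2 - I * z) m x) (Ioi 0) :=
    fun x hx ↦ Psi0_mul_cexp_eq_tsum_psi0Term θ α z hx
  have h_sum : Summable fun m ↦ ∫ x in Ioi (0 : ℝ), ‖psi0Term θ α (1 / 2 - I * z) m x‖ := by
    simp_rw [integral_norm_psi0Term hθ α hs]
    exact (Real.summable_pow_div_factorial _).mul_left _
  have h_int := integrableOn_psi0Term hθ α hs
  refine ⟨IntegrableOn.congr_fun (integrable_tsum_of_summable_integral_norm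
    h_int h_sum) h_eq.symm measurableSet_Ioi, ?_⟩
  rw [setIntegral_congr_fun measurableSet_Ioi h_eq]
  refine (hasSum_integral_of_summable_integral_norm h_int h_sum).unique ?_
  simp_rw [integral_psi0Term hθ α hs]
  have h_exp := (NormedSpace.expSeries_div_hasSum_exp (𝔸 := ℂ) ((α : ℂ) / (1 / 2 - I * z))
    ).mul_left ((1 / 2 - I * z) ^ (-(θ : ℂ)))
  rwa [← Complex.exp_eq_exp_ℂ] at h_exp

/-- the Fourier–Laplace transform identity
`∫₀^∞ Ψ⁰_{θ,α}(x) e^{izx} dx = s^{-θ} exp(α/s)`, `s = 1/2 - iz`, `Im z > -1/2`. -/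
theorem statement6 (θ α : ℝ) (hθ : 0 < θ) (hα : 0 ≤ α) :
    ∀ z : ℂ, -1/2 < z.im → ∀ s : ℂ, s = 1/2 - Complex.I * z →
      IntegrableOn (fun x : ℝ => (Psi0 θ α x : ℂ) * Complex.exp (Complex.I * z * x)) (Ioi 0) ∧
      ∫ x in Ioi (0:ℝ), (Psi0 θ α x : ℂ) * Complex.exp (Complex.I * z * x)
        = s ^ (-(θ : ℂ)) * Complex.exp ((α : ℂ) / s) :=
  statement6_general θ α hθ
end

section
/- Let θ > 0, α ≥ 0, and let n ≥ 1 be an integer. Then for every x ≥ 0, ∫₀ˣ Ψ⁰_{θ,α}(y) · e^{−(x−y)/2} (x−y)^{n−1}/(n−1)! dy = Ψ⁰_{θ+n,α}(x). -/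
/-!
Expanding `Ψ⁰_{θ,α}` into its power series, the exponential factors combine,
`e^{-y/2} e^{-(x-y)/2} = e^{-x/2}`, and each power `y^{θ+m-1}/Γ(θ+m)` is carried by the
Beta integral `∫₀ˣ y^{a-1} (x-y)^{b-1} dy = x^{a+b-1} Γ(a) Γ(b) / Γ(a+b)` to
`x^{θ+n+m-1}/Γ(θ+n+m)`, the corresponding term of `Ψ⁰_{θ+n,α}`. All terms are
nonnegative, so the sum and the integral may be exchanged.
-/

open MeasureTheory Set Filter

open Real

noncomputable def psiTerm (θ α : ℝ) (m : ℕ) (x : ℝ) : ℝ :=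
  α ^ m * x ^ ((m : ℝ) + θ - 1) / (m.factorial * Gamma (θ + m))

lemma Psi0_of_pos {θ α x : ℝ} (hx : 0 < x) :
    Psi0 θ α x = exp (-x / 2) * ∑' m, psiTerm θ α m x := if_pos hx

lemma psiTerm_nonneg {θ α x : ℝ} (hθ : 0 ≤ θ) (hα : 0 ≤ α) (hx : 0 ≤ x) (m : ℕ) :
    0 ≤ psiTerm θ α m x := by
  unfold psiTerm
  positivity

theorem integral_rpow_mul_sub_rpow {a b x : ℝ} (ha : 0 < a) (hb : 0 < b) (hx : 0 < x) :
    ∫ y in (0:ℝ)..x, y ^ (a - 1) * (x - y) ^ (b - 1) =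
      x ^ (a + b - 1) * (Gamma a * Gamma b / Gamma (a + b)) := by
  apply Complex.ofReal_injective
  have hcast : ((∫ y in (0:ℝ)..x, y ^ (a - 1) * (x - y) ^ (b - 1) : ℝ) : ℂ) =
      ∫ y in (0:ℝ)..x, (y : ℂ) ^ ((a : ℂ) - 1) * ((x : ℂ) - y) ^ ((b : ℂ) - 1) := by
    rw [← intervalIntegral.integral_ofReal]
    refine intervalIntegral.integral_congr fun y hy => ?_
    rw [uIcc_of_le hx.le] at hy
    rw [Complex.ofReal_mul, Complex.ofReal_cpow hy.1, Complex.ofReal_cpow (sub_nonneg.2 hy.2)]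
    push_cast
    rfl
  rw [hcast, Complex.betaIntegral_scaled _ _ hx,
    Complex.betaIntegral_eq_Gamma_mul_div _ _ (by simpa using ha) (by simpa using hb)]
  push_cast [Complex.ofReal_cpow hx.le, ← Complex.Gamma_ofReal]
  rfl

theorem intervalIntegrable_rpow_mul_sub_rpow {a b x : ℝ} (ha : 0 < a) (hb : 0 < b)
    (hx : 0 < x) :
    IntervalIntegrable (fun y => y ^ (a - 1) * (x - y) ^ (b - 1)) volume 0 x := by
  -- a non-integrable function would have integral `0`
  refine intervalIntegral.intervalIntegrable_of_integral_ne_zero ?_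
  rw [integral_rpow_mul_sub_rpow ha hb hx]
  positivity

theorem factorial_mul_Gamma_le_Gamma_add {s : ℝ} (hs : 1 ≤ s) (m : ℕ) :
    m.factorial * Gamma s ≤ Gamma (s + m) := by
  induction m with
  | zero => simp
  | succ k ih =>
    have hΓ : Gamma (s + (k + 1 : ℕ)) = (s + k) * Gamma (s + k) := by
      rw [Nat.cast_succ, ← add_assoc, Gamma_add_one (by positivity)]
    calc ((k + 1).factorial : ℝ) * Gamma s = (k + 1) * (k.factorial * Gamma s) := by
          push_cast [Nat.factorial_succ]; ring
      _ ≤ (s + k) * Gamma (s + k) := by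
          have : 0 ≤ Gamma s := Gamma_nonneg_of_nonneg (by linarith)
          exact mul_le_mul (by linarith) ih (by positivity) (by positivity)
      _ = Gamma (s + (k + 1 : ℕ)) := hΓ.symm

theorem integral_psiTerm_mul_rpow_sub {θ b x : ℝ} (α : ℝ) (m : ℕ) (hθ : 0 < θ)
    (hb : 0 < b) (hx : 0 < x) :
    ∫ y in (0:ℝ)..x, psiTerm θ α m y * ((x - y) ^ (b - 1) / Gamma b) =
      psiTerm (θ + b) α m x := by
  have hm : 0 < (m : ℝ) + θ := by positivity
  have hintegrand : (fun y => psiTerm θ α m y * ((x - y) ^ (b - 1) / Gamma b)) =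
      fun y => α ^ m / (m.factorial * Gamma (θ + m) * Gamma b) *
        (y ^ ((m + θ) - 1) * (x - y) ^ (b - 1)) := by
    funext y
    simp only [psiTerm]
    ring
  rw [hintegrand, intervalIntegral.integral_const_mul, integral_rpow_mul_sub_rpow hm hb hx,
    psiTerm, add_comm (m : ℝ) θ, show θ + b + m = θ + m + b by ring]
  field_simp
  ring_nf

theorem summable_psiTerm {s α x : ℝ} (hs : 0 < s) (hα : 0 ≤ α) (hx : 0 ≤ x) :
    Summable fun m => psiTerm s α m x := by
  -- after one shift, `Γ(s + 1 + m) ≥ m! Γ(s + 1)` compares the series with `exp (α x)`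
  rw [← summable_nat_add_iff 1]
  refine Summable.of_nonneg_of_le (fun m => psiTerm_nonneg hs.le hα hx _) (fun m => ?_)
    ((summable_pow_div_factorial (α * x)).mul_left (α * x ^ s / Gamma (s + 1)))
  have hfac :
      (m.factorial : ℝ) * Gamma (s + 1) ≤ (m + 1).factorial * Gamma (s + (m + 1 : ℕ)) := by
    have hone : (1 : ℝ) ≤ (m + 1).factorial := by exact_mod_cast (m + 1).factorial_pos
    rw [show s + ((m + 1 : ℕ) : ℝ) = s + 1 + m by push_cast; ring]
    exact (factorial_mul_Gamma_le_Gamma_add (by linarith) m).trans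
      (le_mul_of_one_le_left (Gamma_nonneg_of_nonneg (by positivity)) hone)
  have hnum : α ^ (m + 1) * x ^ (((m + 1 : ℕ) : ℝ) + s - 1) = α * x ^ s * (α * x) ^ m := by
    rw [show ((m + 1 : ℕ) : ℝ) + s - 1 = s + m by push_cast; ring, rpow_add' hx (by positivity),
      rpow_natCast]
    ring
  calc psiTerm s α (m + 1) x
      = α * x ^ s * (α * x) ^ m / ((m + 1).factorial * Gamma (s + (m + 1 : ℕ))) := by
        rw [psiTerm, hnum]
    _ ≤ α * x ^ s * (α * x) ^ m / (m.factorial * Gamma (s + 1)) :=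
        div_le_div_of_nonneg_left (by positivity) (by positivity) hfac
    _ = α * x ^ s / Gamma (s + 1) * ((α * x) ^ m / m.factorial) := by ring

theorem integral_tsum_psiTerm_mul_rpow_sub {θ α b x : ℝ} (hθ : 0 < θ) (hα : 0 ≤ α)
    (hb : 0 < b) (hx : 0 < x) :
    ∫ y in (0:ℝ)..x, (∑' m, psiTerm θ α m y) * ((x - y) ^ (b - 1) / Gamma b) =
      ∑' m, psiTerm (θ + b) α m x := by
  set F : ℕ → ℝ → ℝ := fun m y => psiTerm θ α m y * ((x - y) ^ (b - 1) / Gamma b)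
  have hF_int : ∀ m, Integrable (F m) (volume.restrict (Ioc 0 x)) := by
    intro m
    have hm : 0 < (m : ℝ) + θ := by positivity
    have h := ((intervalIntegrable_rpow_mul_sub_rpow hm hb hx).const_mul
      (α ^ m / (m.factorial * Gamma (θ + m) * Gamma b)))
    rw [intervalIntegrable_iff_integrableOn_Ioc_of_le hx.le] at h
    refine h.congr_fun (fun y _ => ?_) measurableSet_Ioc
    simp only [F, psiTerm]
    ring
  have hF_norm : ∀ m, ∫ y in Ioc 0 x, ‖F m y‖ = psiTerm (θ + b) α m x := by
    intro m
    rw [← integral_psiTerm_mul_rpow_sub α m hθ hb hx, intervalIntegral.integral_of_le hx.le]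
    refine setIntegral_congr_fun measurableSet_Ioc fun y hy => norm_of_nonneg ?_
    have : 0 ≤ (x - y) ^ (b - 1) := rpow_nonneg (sub_nonneg.2 hy.2) _
    exact mul_nonneg (psiTerm_nonneg hθ.le hα hy.1.le m) (by positivity)
  have hF_sum : Summable fun m => ∫ y in Ioc 0 x, ‖F m y‖ := by
    simpa only [hF_norm] using summable_psiTerm (by positivity) hα hx.le
  calc ∫ y in (0:ℝ)..x, (∑' m, psiTerm θ α m y) * ((x - y) ^ (b - 1) / Gamma b)
      = ∫ y in Ioc 0 x, ∑' m, F m y := by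
        simp only [F, tsum_mul_right, intervalIntegral.integral_of_le hx.le]
    _ = ∑' m, ∫ y in Ioc 0 x, F m y :=
        (integral_tsum_of_summable_integral_norm hF_int hF_sum).symm
    _ = ∑' m, psiTerm (θ + b) α m x := by
        simp only [F, ← intervalIntegral.integral_of_le hx.le,
          integral_psiTerm_mul_rpow_sub α _ hθ hb hx]

/-- the convolution identity
`∫₀ˣ Ψ⁰_{θ,α}(y) e^{-(x-y)/2} (x-y)^{n-1}/(n-1)! dy = Ψ⁰_{θ+n,α}(x)`. -/
theorem statement17 (θ α : ℝ) (hθ : 0 < θ) (hα : 0 ≤ α) (n : ℕ) (hn : 1 ≤ n) :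
    ∀ x ≥ (0:ℝ),
      (∫ y in (0:ℝ)..x,
          Psi0 θ α y * (Real.exp (-(x - y) / 2) * (x - y) ^ (n - 1) / (n - 1).factorial))
        = Psi0 (θ + n) α x := by
  intro x hx
  rcases hx.eq_or_lt with rfl | hx
  · simp [Psi0]
  have hn' : ((n - 1 : ℕ) : ℝ) = n - 1 := by rw [Nat.cast_sub hn, Nat.cast_one]
  have hkernel : ∀ y : ℝ, (x - y) ^ (n - 1) / ((n - 1).factorial : ℝ) =
      (x - y) ^ ((n : ℝ) - 1) / Gamma n := by
    intro y
    rw [← hn', rpow_natCast, ← Gamma_nat_eq_factorial, hn', sub_add_cancel]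
  have hintegrand : ∀ y ∈ Ioc 0 x,
      Psi0 θ α y * (exp (-(x - y) / 2) * (x - y) ^ (n - 1) / (n - 1).factorial) =
        exp (-x / 2) * ((∑' m, psiTerm θ α m y) * ((x - y) ^ ((n : ℝ) - 1) / Gamma n)) := by
    intro y hy
    have hexp : exp (-y / 2) * exp (-(x - y) / 2) = exp (-x / 2) := by
      rw [← exp_add]
      congr 1
      ring
    rw [Psi0_of_pos hy.1, mul_div_assoc, hkernel, ← hexp]
    ring
  calc _ = ∫ y in (0:ℝ)..x,
        exp (-x / 2) * ((∑' m, psiTerm θ α m y) * ((x - y) ^ ((n : ℝ) - 1) / Gamma n)) := by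
        simp only [intervalIntegral.integral_of_le hx.le]
        exact setIntegral_congr_fun measurableSet_Ioc hintegrand
    _ = Psi0 (θ + n) α x := by
        rw [intervalIntegral.integral_const_mul,
          integral_tsum_psiTerm_mul_rpow_sub hθ hα (Nat.cast_pos.2 hn) hx, Psi0_of_pos hx]
end
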